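/- Fix an integer N ≥ 1 and consider the polynomial ring ℂ[y_{ij} : 1 ≤ i ≤ j ≤ N], with the convention y_{ji} := y_{ij} for i ≤ j (coordinates on symmetric N×N matrices). Let (P_{ab}) be the antisymmetric family of polynomials determined on generators by P(y_{ij}, y_{lm}) = (sign(m−i) + sign(l−j))·y_{il}y_{jm} + (sign(l−i) + sign(m−j))·y_{im}y_{jl}, where sign(k) ∈ {−1,0,1} is the sign of the integer k. Then the associated bracket {f,g} = Σ_{a,b} P_{ab}·(∂f/∂x_a)·(∂g/∂x_b) satisfies the Jacobi identity for all polynomials f, g, h, i.e. it is a Poisson bracket. (This is the Poisson structure of §5.5 of the paper, arising from the C-type compact Hermitian symmetric space Sp_{2N}-flag variety; it is the quasiclassical limit of Noumi's algebra of quantum symmetric matrices.) -/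

import Mathlib

open MvPolynomial

/-- The bracket on a multivariate polynomial ring associated to a family of
polynomials `P a b`: `{f, g} = Σ_{a,b} P a b · ∂f/∂x_a · ∂g/∂x_b`. -/
noncomputable def polyBracket {σ : Type*} [Fintype σ]
    (P : σ → σ → MvPolynomial σ ℂ) (f g : MvPolynomial σ ℂ) : MvPolynomial σ ℂ :=
  ∑ a : σ, ∑ b : σ, P a b * pderiv a f * pderiv b g

namespace StmtC

/-- Index set for the variables `y_{ij}`, `1 ≤ i ≤ j ≤ N` (coordinates on
symmetric `N × N` matrices). -/
abbrev Idx (N : ℕ) := {p : Fin N × Fin N // p.1 ≤ p.2}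

variable {N : ℕ}

/-- The variable `y_{ij}`, with the convention `y_{ji} = y_{ij}` for `i ≤ j`. -/
noncomputable def y (i j : Fin N) : MvPolynomial (Idx N) ℂ :=
  if h : i ≤ j then X ⟨(i, j), h⟩ else X ⟨(j, i), le_of_not_ge h⟩

/-- `sg i j` is the sign of `j - i`. -/
def sg (i j : Fin N) : ℂ := if i < j then 1 else if j < i then -1 else 0

/-- The antisymmetric family of polynomials determined on generators by
`P(y_{ij}, y_{lm}) = (sign(m−i) + sign(l−j))·y_{il}y_{jm} + (sign(l−i) + sign(m−j))·y_{im}y_{jl}`. -/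
noncomputable def P (a b : Idx N) : MvPolynomial (Idx N) ℂ :=
  C (sg a.1.1 b.1.2 + sg a.1.2 b.1.1) * y a.1.1 b.1.1 * y a.1.2 b.1.2 +
    C (sg a.1.1 b.1.1 + sg a.1.2 b.1.2) * y a.1.1 b.1.2 * y a.1.2 b.1.1

end StmtC

/-!
The bracket `{f, g} = Σ P a b ∂_a f ∂_b g` of an antisymmetric family is a biderivation, so its
Jacobiator is a derivation in each argument and it suffices to check the Jacobi identity on
three generators `y_{ij}, y_{lm}, y_{pq}`. Writing `s_{ab}` for the sign of `b - a`, after using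
`s_{ba} = -s_{ab}` and `y_{ba} = y_{ab}` the Jacobiator of the generators is the sum, over the
swaps `l ↔ m` and `p ↔ q`, of
`(G(i, m, p) - G(j, l, q)) · (y_{il} y_{jp} y_{mq} - y_{iq} y_{jm} y_{lp})`,
where `G(a, b, c) = s_{ab} s_{ac} - s_{ab} s_{bc} + s_{ac} s_{bc}`. The sign function satisfies
`G(a, b, c) = 1` unless `a = b = c`, and in that case the monomial difference vanishes.
-/

theorem MvPolynomial.eq_zero_of_leibniz {R σ : Type*} [CommSemiring R]
    (D : MvPolynomial σ R → MvPolynomial σ R) (hC : ∀ c, D (C c) = 0)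
    (hadd : ∀ p q, D (p + q) = D p + D q) (hmul : ∀ p q, D (p * q) = p * D q + q * D p)
    (hX : ∀ i, D (X i) = 0) (p : MvPolynomial σ R) : D p = 0 := by
  induction p using MvPolynomial.induction_on with
  | C c => exact hC c
  | add p q hp hq => rw [hadd, hp, hq, add_zero]
  | mul_X p i hp => rw [hmul, hp, hX, mul_zero, mul_zero, add_zero]

section Bracket

variable {σ : Type*} [Fintype σ] (P : σ → σ → MvPolynomial σ ℂ)

lemma polyBracket_add_left (f g h : MvPolynomial σ ℂ) :
    polyBracket P (f + g) h = polyBracket P f h + polyBracket P g h := by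
  simp only [polyBracket, map_add, mul_add, add_mul, Finset.sum_add_distrib]

lemma polyBracket_add_right (f g h : MvPolynomial σ ℂ) :
    polyBracket P f (g + h) = polyBracket P f g + polyBracket P f h := by
  simp only [polyBracket, map_add, mul_add, Finset.sum_add_distrib]

lemma polyBracket_C_right (f : MvPolynomial σ ℂ) (c : ℂ) : polyBracket P f (C c) = 0 := by
  simp [polyBracket]

lemma polyBracket_mul_left (f g h : MvPolynomial σ ℂ) :
    polyBracket P (f * g) h = f * polyBracket P g h + g * polyBracket P f h := by
  simp only [polyBracket, pderiv_mul, Finset.mul_sum, ← Finset.sum_add_distrib]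
  refine Finset.sum_congr rfl fun a _ => Finset.sum_congr rfl fun b _ => ?_
  ring

lemma polyBracket_mul_right (f g h : MvPolynomial σ ℂ) :
    polyBracket P f (g * h) = g * polyBracket P f h + h * polyBracket P f g := by
  simp only [polyBracket, pderiv_mul, Finset.mul_sum, ← Finset.sum_add_distrib]
  refine Finset.sum_congr rfl fun a _ => Finset.sum_congr rfl fun b _ => ?_
  ring

lemma polyBracket_X_X (a b : σ) : polyBracket P (X a) (X b) = P a b := by
  classical
  simp [polyBracket, pderiv_X, Pi.single_apply]

lemma polyBracket_skew (hP : ∀ a b, P b a = -P a b) (f g : MvPolynomial σ ℂ) :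
    polyBracket P g f = -polyBracket P f g := by
  rw [polyBracket, Finset.sum_comm, polyBracket, ← Finset.sum_neg_distrib]
  refine Finset.sum_congr rfl fun a _ => ?_
  rw [← Finset.sum_neg_distrib]
  refine Finset.sum_congr rfl fun b _ => ?_
  rw [hP]
  ring

noncomputable def jacobiator (f g h : MvPolynomial σ ℂ) : MvPolynomial σ ℂ :=
  polyBracket P f (polyBracket P g h) + polyBracket P g (polyBracket P h f) +
    polyBracket P h (polyBracket P f g)

lemma jacobiator_cyclic (f g h : MvPolynomial σ ℂ) : jacobiator P f g h = jacobiator P g h f := by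
  unfold jacobiator
  ring

lemma jacobiator_add_left (f f' g h : MvPolynomial σ ℂ) :
    jacobiator P (f + f') g h = jacobiator P f g h + jacobiator P f' g h := by
  simp only [jacobiator, polyBracket_add_left, polyBracket_add_right]
  ring

lemma jacobiator_C_left (c : ℂ) (g h : MvPolynomial σ ℂ) : jacobiator P (C c) g h = 0 := by
  simp [jacobiator, polyBracket]

lemma jacobiator_mul_left (hP : ∀ a b, P b a = -P a b) (f f' g h : MvPolynomial σ ℂ) :
    jacobiator P (f * f') g h = f * jacobiator P f' g h + f' * jacobiator P f g h := by
  simp only [jacobiator, polyBracket_mul_left, polyBracket_mul_right, polyBracket_add_right]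
  linear_combination polyBracket P h f' * polyBracket_skew P hP f g +
    polyBracket P h f * polyBracket_skew P hP f' g

end Bracket

theorem jacobiator_eq_zero {σ : Type*} [Fintype σ] {P : σ → σ → MvPolynomial σ ℂ}
    (hP : ∀ a b, P b a = -P a b) (hX : ∀ a b c, jacobiator P (X a) (X b) (X c) = 0)
    (f g h : MvPolynomial σ ℂ) : jacobiator P f g h = 0 := by
  have of_X_left : ∀ g h, (∀ a, jacobiator P (X a) g h = 0) → ∀ f, jacobiator P f g h = 0 :=
    fun g h hXgh => eq_zero_of_leibniz (jacobiator P · g h) (jacobiator_C_left P · g h)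
      (jacobiator_add_left P · · g h) (jacobiator_mul_left P hP · · g h) hXgh
  refine of_X_left g h (fun a => ?_) f
  rw [jacobiator_cyclic]
  refine of_X_left h (X a) (fun b => ?_) g
  rw [jacobiator_cyclic]
  exact of_X_left (X a) (X b) (fun c => hX c a b) h

namespace StmtC

variable {N : ℕ}

lemma sg_skew (a b : Fin N) : sg a b = -sg b a := by
  unfold sg
  rcases lt_trichotomy a b with h | rfl | h
  · simp [h, lt_asymm h]
  · simp
  · simp [h, lt_asymm h]

lemma y_comm (i j : Fin N) : y i j = y j i := by
  unfold y
  rcases lt_trichotomy i j with h | rfl | h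
  · rw [dif_pos h.le, dif_neg (not_le.mpr h)]
  · rfl
  · rw [dif_neg (not_le.mpr h), dif_pos h.le]

lemma y_of_le {i j : Fin N} (h : i ≤ j) : y i j = X ⟨(i, j), h⟩ := dif_pos h

noncomputable def yBracket (i j l m : Fin N) : MvPolynomial (Idx N) ℂ :=
  C (sg i m + sg j l) * y i l * y j m + C (sg i l + sg j m) * y i m * y j l

lemma yBracket_comm_left (i j l m : Fin N) : yBracket j i l m = yBracket i j l m := by
  simp only [yBracket, map_add]
  ring

lemma yBracket_comm_right (i j l m : Fin N) : yBracket i j m l = yBracket i j l m := by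
  simp only [yBracket, map_add]
  ring

lemma yBracket_skew (i j l m : Fin N) : yBracket l m i j = -yBracket i j l m := by
  simp only [yBracket, sg_skew l j, sg_skew m i, sg_skew l i, sg_skew m j,
    y_comm l i, y_comm m j, y_comm l j, y_comm m i, map_add, map_neg]
  ring

lemma P_skew (a b : Idx N) : P b a = -P a b :=
  yBracket_skew a.1.1 a.1.2 b.1.1 b.1.2

lemma polyBracket_y_y (i j l m : Fin N) : polyBracket P (y i j) (y l m) = yBracket i j l m := by
  have ordered : ∀ i j l m : Fin N, i ≤ j → l ≤ m →
      polyBracket P (y i j) (y l m) = yBracket i j l m := fun i j l m hij hlm => by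
    rw [y_of_le hij, y_of_le hlm, polyBracket_X_X]
    rfl
  rcases le_total i j with hij | hji <;> rcases le_total l m with hlm | hml
  · exact ordered i j l m hij hlm
  · rw [y_comm l m, ordered i j m l hij hml, yBracket_comm_right]
  · rw [y_comm i j, ordered j i l m hji hlm, yBracket_comm_left]
  · rw [y_comm i j, y_comm l m, ordered j i m l hji hml, yBracket_comm_left, yBracket_comm_right]

def signCocycle (a b c : Fin N) : ℂ := sg a b * sg a c - sg a b * sg b c + sg a c * sg b c

lemma signCocycle_eq_one {a b c : Fin N} (h : ¬(a = b ∧ b = c)) : signCocycle a b c = 1 := by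
  simp only [signCocycle, sg, Fin.lt_def]
  simp only [Fin.ext_iff] at h
  split_ifs <;> first | (exfalso; omega) | norm_num

lemma signCocycle_sub_mul_eq_zero (i j l m p q : Fin N) :
    C (signCocycle i m p - signCocycle j l q) *
      (y i l * y j p * y m q - y i q * y j m * y l p) = 0 := by
  by_cases hi : i = m ∧ m = p
  · obtain ⟨rfl, rfl⟩ := hi
    rw [y_comm l i]
    ring
  by_cases hj : j = l ∧ l = q
  · obtain ⟨rfl, rfl⟩ := hj
    rw [y_comm m j]
    ring
  rw [signCocycle_eq_one hi, signCocycle_eq_one hj, sub_self, map_zero, zero_mul]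

lemma jacobiator_y (i j l m p q : Fin N) : jacobiator P (y i j) (y l m) (y p q) = 0 := by
  simp only [jacobiator, polyBracket_y_y, yBracket, polyBracket_add_right, polyBracket_mul_right,
    polyBracket_C_right, mul_zero, add_zero]
  simp only [sg_skew l i, sg_skew l j, sg_skew m i, sg_skew m j, sg_skew p i, sg_skew p j,
    sg_skew p l, sg_skew p m, sg_skew q i, sg_skew q j, sg_skew q l, sg_skew q m,
    y_comm l i, y_comm l j, y_comm m i, y_comm m j, y_comm p i, y_comm p j,
    y_comm p l, y_comm p m, y_comm q i, y_comm q j, y_comm q l, y_comm q m, map_add, map_neg]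
  have key := @signCocycle_sub_mul_eq_zero N
  simp only [signCocycle, map_sub, map_add, map_mul] at key
  linear_combination key i j l m p q + key i j l m q p + key i j m l p q + key i j m l q p

end StmtC

theorem jacobi_quantum_symmetric_matrices_general (N : ℕ)
    (f g h : MvPolynomial (StmtC.Idx N) ℂ) :
    polyBracket StmtC.P f (polyBracket StmtC.P g h) +
      polyBracket StmtC.P g (polyBracket StmtC.P h f) +
      polyBracket StmtC.P h (polyBracket StmtC.P f g) = 0 := by
  refine jacobiator_eq_zero StmtC.P_skew (fun a b c => ?_) f g h
  rw [← StmtC.y_of_le a.2, ← StmtC.y_of_le b.2, ← StmtC.y_of_le c.2]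
  exact StmtC.jacobiator_y _ _ _ _ _ _

/-- For `N ≥ 1`, the bracket on `ℂ[y_{ij} : 1 ≤ i ≤ j ≤ N]` (coordinates on symmetric
matrices, with `y_{ji} = y_{ij}`) determined by
`{y_{ij}, y_{lm}} = (sign(m−i) + sign(l−j))·y_{il}y_{jm} + (sign(l−i) + sign(m−j))·y_{im}y_{jl}`
satisfies the Jacobi identity, i.e. it is a Poisson bracket (the quasiclassical limit of
Noumi's quantum symmetric matrices). -/
theorem jacobi_quantum_symmetric_matrices (N : ℕ) (hN : 1 ≤ N)
    (f g h : MvPolynomial (StmtC.Idx N) ℂ) :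
    polyBracket StmtC.P f (polyBracket StmtC.P g h) +
      polyBracket StmtC.P g (polyBracket StmtC.P h f) +
      polyBracket StmtC.P h (polyBracket StmtC.P f g) = 0 :=
  jacobi_quantum_symmetric_matrices_general N f g h
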